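/- If L is a finite-dimensional nilpotent Lie algebra of class two with dim(L/L²) = m, then L ⊗ L ≅ M(L) ⊕ L² ⊕ A(m(m+1)/2). -/

import Mathlib

open LieAlgebra Matrix Module


open LieAlgebra

section ProdLie
variable {L M : Type*}

instance prodLieRing [LieRing L] [LieRing M] : LieRing (L × M) where
  bracket x y := (⁅x.1, y.1⁆, ⁅x.2, y.2⁆)
  add_lie x y z := by ext <;> simp [add_lie]
  lie_add x y z := by ext <;> simp [lie_add]
  lie_self x := by ext <;> simp
  leibniz_lie x y z := by ext <;> simp

@[simp] theorem prod_bracket_fst [LieRing L] [LieRing M] (x y : L × M) :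
    ⁅x, y⁆.1 = ⁅x.1, y.1⁆ := rfl
@[simp] theorem prod_bracket_snd [LieRing L] [LieRing M] (x y : L × M) :
    ⁅x, y⁆.2 = ⁅x.2, y.2⁆ := rfl

instance prodLieAlgebra (F : Type*) [CommRing F] [LieRing L] [LieRing M]
    [LieAlgebra F L] [LieAlgebra F M] : LieAlgebra F (L × M) where
  lie_smul t x y := by ext <;> simp
end ProdLie

section AbL
variable (F : Type*) [Field F]

/-- The abelian Lie algebra of dimension `k` over `F`. -/
def AbLie (k : ℕ) : Type _ := Fin k → F

instance (k : ℕ) : AddCommGroup (AbLie F k) := Pi.addCommGroup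
instance (k : ℕ) : Module F (AbLie F k) := Pi.module _ _ _

instance (k : ℕ) : LieRing (AbLie F k) where
  bracket _ _ := 0
  add_lie _ _ _ := (zero_add 0).symm
  lie_add _ _ _ := (zero_add 0).symm
  lie_self _ := rfl
  leibniz_lie _ _ _ := (zero_add 0).symm

instance (k : ℕ) : LieAlgebra F (AbLie F k) where
  lie_smul t x y := (smul_zero t).symm

instance (k : ℕ) : FiniteDimensional F (AbLie F k) :=
  (inferInstance : FiniteDimensional F (Fin k → F))

instance (k : ℕ) : IsLieAbelian (AbLie F k) := ⟨fun _ _ => rfl⟩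
end AbL
open Matrix
section Heis
variable (F : Type*) [Field F]

/-- The Heisenberg Lie algebra `H(m)` of dimension `2m+1`. -/
def Heis (m : ℕ) : Type _ := (Fin m → F) × (Fin m → F) × F

instance (m : ℕ) : AddCommGroup (Heis F m) := Prod.instAddCommGroup
instance (m : ℕ) : Module F (Heis F m) := Prod.instModule

instance (m : ℕ) : LieRing (Heis F m) where
  bracket x y := (0, 0, x.1 ⬝ᵥ y.2.1 - y.1 ⬝ᵥ x.2.1)
  add_lie x y z := by
    refine Prod.ext ?_ (Prod.ext ?_ ?_)
    · show (0 : Fin m → F) = 0 + 0; rw [add_zero]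
    · show (0 : Fin m → F) = 0 + 0; rw [add_zero]
    · show (x.1 + y.1) ⬝ᵥ z.2.1 - z.1 ⬝ᵥ (x.2.1 + y.2.1) =
        (x.1 ⬝ᵥ z.2.1 - z.1 ⬝ᵥ x.2.1) + (y.1 ⬝ᵥ z.2.1 - z.1 ⬝ᵥ y.2.1)
      rw [add_dotProduct, dotProduct_add]; ring
  lie_add x y z := by
    refine Prod.ext ?_ (Prod.ext ?_ ?_)
    · show (0 : Fin m → F) = 0 + 0; rw [add_zero]
    · show (0 : Fin m → F) = 0 + 0; rw [add_zero]
    · show x.1 ⬝ᵥ (y.2.1 + z.2.1) - (y.1 + z.1) ⬝ᵥ x.2.1 =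
        (x.1 ⬝ᵥ y.2.1 - y.1 ⬝ᵥ x.2.1) + (x.1 ⬝ᵥ z.2.1 - z.1 ⬝ᵥ x.2.1)
      rw [add_dotProduct, dotProduct_add]; ring
  lie_self x := by
    refine Prod.ext rfl (Prod.ext rfl ?_)
    show x.1 ⬝ᵥ x.2.1 - x.1 ⬝ᵥ x.2.1 = 0
    ring
  leibniz_lie x y z := by
    refine Prod.ext ?_ (Prod.ext ?_ ?_)
    · show (0 : Fin m → F) = 0 + 0; rw [add_zero]
    · show (0 : Fin m → F) = 0 + 0; rw [add_zero]
    · show x.1 ⬝ᵥ (0 : Fin m → F) - (0 : Fin m → F) ⬝ᵥ x.2.1 =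
        ((0 : Fin m → F) ⬝ᵥ z.2.1 - z.1 ⬝ᵥ (0 : Fin m → F)) +
          (y.1 ⬝ᵥ (0 : Fin m → F) - (0 : Fin m → F) ⬝ᵥ y.2.1)
      simp

instance (m : ℕ) : LieAlgebra F (Heis F m) where
  lie_smul t x y := by
    refine Prod.ext ?_ (Prod.ext ?_ ?_)
    · show (0 : Fin m → F) = t • 0; rw [smul_zero]
    · show (0 : Fin m → F) = t • 0; rw [smul_zero]
    · show x.1 ⬝ᵥ (t • y.2.1) - (t • y.1) ⬝ᵥ x.2.1 = t • (x.1 ⬝ᵥ y.2.1 - y.1 ⬝ᵥ x.2.1)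
      rw [dotProduct_smul, smul_dotProduct, smul_sub]

instance (m : ℕ) : FiniteDimensional F (Heis F m) :=
  (inferInstance : FiniteDimensional F ((Fin m → F) × (Fin m → F) × F))
end Heis
open LieAlgebra

universe u v

section Functors
variable (F : Type u) [Field F] (L : Type v) [LieRing L] [LieAlgebra F L]

/-- The canonical free presentation `FreeLieAlgebra F L → L`. -/
noncomputable def presHom : FreeLieAlgebra F L →ₗ⁅F⁆ L := FreeLieAlgebra.lift F id

/-- The relation ideal `R` of the canonical free presentation. -/
noncomputable def presKer : LieIdeal F (FreeLieAlgebra F L) := (presHom F L).ker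

/-- The Schur multiplier `M(L) = (R ∩ F²)/[R,F]` of a Lie algebra. -/
noncomputable abbrev Multiplier : Type (max u v) :=
  ↥((presKer F L ⊓ derivedSeries F (FreeLieAlgebra F L) 1).toSubmodule) ⧸
    (Submodule.comap
      ((presKer F L ⊓ derivedSeries F (FreeLieAlgebra F L) 1).toSubmodule).subtype
      (⁅presKer F L, (⊤ : LieIdeal F (FreeLieAlgebra F L))⁆ : LieIdeal F (FreeLieAlgebra F L)).toSubmodule)


/-- Relations defining the nonabelian tensor square. -/
def tensorRel : Set (FreeLieAlgebra F (L × L)) :=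
  letI e : L × L → FreeLieAlgebra F (L × L) := FreeLieAlgebra.of F
  { x | (∃ (c : F) (a b : L), x = e (c • a, b) - c • e (a, b)) ∨
        (∃ (c : F) (a b : L), x = e (a, c • b) - c • e (a, b)) ∨
        (∃ a a' b : L, x = e (a + a', b) - e (a, b) - e (a', b)) ∨
        (∃ a b b' : L, x = e (a, b + b') - e (a, b) - e (a, b')) ∨
        (∃ a a' b : L, x = e (⁅a, a'⁆, b) - e (a, ⁅a', b⁆) + e (a', ⁅a, b⁆)) ∨
        (∃ a b b' : L, x = e (a, ⁅b, b'⁆) - e (⁅b', a⁆, b) + e (⁅b, a⁆, b')) ∨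
        (∃ a b a' b' : L, x = ⁅e (a, b), e (a', b')⁆ + e (⁅b, a⁆, ⁅a', b'⁆)) }

/-- The nonabelian tensor square `L ⊗ L`. -/
abbrev NTensor : Type (max u v) :=
  FreeLieAlgebra F (L × L) ⧸ LieSubmodule.lieSpan F (FreeLieAlgebra F (L × L)) (tensorRel F L)


/-- The generator `a ⊗ b` of the nonabelian tensor square. -/
noncomputable def tmk (a b : L) : NTensor F L :=
  LieSubmodule.Quotient.mk (N := LieSubmodule.lieSpan F (FreeLieAlgebra F (L × L)) (tensorRel F L))
    (FreeLieAlgebra.of F (a, b))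

/-- The square `L □ L`, i.e. the subalgebra of `L ⊗ L` generated by the elements `a ⊗ a`. -/
noncomputable def SqSub : LieSubalgebra F (NTensor F L) :=
  LieSubalgebra.lieSpan F _ { x | ∃ a : L, x = tmk F L a a }

/-- The ideal of `L ⊗ L` generated by the elements `a ⊗ a`. -/
noncomputable def sqIdeal : LieIdeal F (NTensor F L) :=
  LieSubmodule.lieSpan F _ { x | ∃ a : L, x = tmk F L a a }

/-- The exterior square `L ∧ L`. -/
noncomputable abbrev ExtSq : Type (max u v) := NTensor F L ⧸ sqIdeal F L


/-- The generator `a ∧ b` of the exterior square. -/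
noncomputable def wmk (a b : L) : ExtSq F L :=
  LieSubmodule.Quotient.mk (N := sqIdeal F L) (tmk F L a b)

/-- The exterior center `Z^∧(L)`. -/
noncomputable def extCenter : Set L := { x : L | ∀ l : L, wmk F L x l = 0 }

/-- A Lie algebra is capable if it is isomorphic to `H/Z(H)` for some Lie algebra `H`. -/
def Capable : Prop :=
  ∃ (H : Type (max u v)) (_ : LieRing H) (_ : LieAlgebra F H),
    Nonempty ((H ⧸ LieAlgebra.center F H) ≃ₗ⁅F⁆ L)

/-- The corank `t(L)` of an `n`-dimensional nilpotent Lie algebra. -/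
noncomputable def corank : ℕ :=
  Module.finrank F L * (Module.finrank F L - 1) / 2 - Module.finrank F (Multiplier F L)

/-- The abelianization of `L` (as an `F`-module). -/
noncomputable abbrev AbQuot : Type v := L ⧸ derivedSeries F L 1

end Functors

/-!
Let `R ↪ F ↠ L` be the free presentation. Since `R / [R, F]` is central in `F / [R, F]`, the class
of `⁅x, y⁆` modulo `[R, F]` only depends on the images of `x, y` in `L`; when `L` has class two this
gives a surjection `β : L ⊗ L → F² / [R, F]`, `a ⊗ b ↦ ⁅a, b⁆`. It kills every `a ⊗ a`, and
conversely `(a, b) ↦ a ⊗ b` modulo the squares is a 2-cocycle on `L`: lifting `F ↠ L` to the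
corresponding central extension yields a map `F² / [R, F] → (L ⊗ L) / ⟨a ⊗ a⟩` whose composite
with `β` is the quotient map. So `ker β` is exactly the span of the squares. Over a field the sequences
`ker β ↪ L ⊗ L ↠ F² / [R, F]` and `M(L) ↪ F² / [R, F] ↠ L²` split. Finally, in class two `a ⊗ a`
only depends on `a` modulo `L²`, so for lifts `aᵢ` of a basis of `L / L²` the span of the squares
is spanned by the `aᵢ ⊗ aᵢ` and the `aᵢ ⊗ aⱼ + aⱼ ⊗ aᵢ` (`i < j`); these `m (m + 1) / 2` elements
are independent, as their images in `L / L² ⊗ L / L²` show.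
-/

theorem LieAlgebra.lie_mem_derivedSeries_one {R K : Type*} [CommRing R] [LieRing K]
    [LieAlgebra R K] (x y : K) : ⁅x, y⁆ ∈ derivedSeries R K 1 := by
  rw [derivedSeries_def, derivedSeriesOfIdeal_succ, derivedSeriesOfIdeal_zero]
  exact LieSubmodule.lie_mem_lie (LieSubmodule.mem_top x) (LieSubmodule.mem_top y)

theorem LieAlgebra.derivedSeries_one_toSubmodule_le {R K : Type*} [CommRing R] [LieRing K]
    [LieAlgebra R K] {p : Submodule R K} (h : ∀ x y : K, ⁅x, y⁆ ∈ p) :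
    (derivedSeries R K 1).toSubmodule ≤ p := by
  rw [← LieIdeal.toLieSubalgebra_toSubmodule, coe_derivedSeries_one_eq, Submodule.span_le]
  rintro _ ⟨x, y, rfl⟩
  exact h x y

theorem FreeLieAlgebra.eq_top_of_forall_of_mem {R X : Type*} [CommRing R]
    (K : LieSubalgebra R (FreeLieAlgebra R X)) (h : ∀ x, of R x ∈ K) : K = ⊤ := by
  let j : FreeLieAlgebra R X →ₗ⁅R⁆ K := lift R fun x => ⟨_, h x⟩
  have hj : K.incl.comp j = LieHom.id := hom_ext fun x => by simp [j, lift_of_apply]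
  refine eq_top_iff.2 fun z _ => ?_
  have hz : (j z : FreeLieAlgebra R X) = z := LieHom.congr_fun hj z
  exact hz ▸ (j z).2

theorem nonempty_linearEquiv_ker_prod {K V W : Type*} [DivisionRing K] [AddCommGroup V]
    [Module K V] [AddCommGroup W] [Module K W] (f : V →ₗ[K] W) (hf : Function.Surjective f) :
    Nonempty (V ≃ₗ[K] LinearMap.ker f × W) := by
  obtain ⟨C, hC⟩ := (LinearMap.ker f).exists_isCompl
  exact ⟨(Submodule.prodEquivOfIsCompl _ _ hC).symm.trans <| (LinearEquiv.refl K _).prodCongr <|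
    (Submodule.quotientEquivOfIsCompl _ _ hC).symm.trans (f.quotKerEquivOfSurjective hf)⟩

universe w

def TrivialLieAlgebra (M : Type w) : Type w := M

namespace TrivialLieAlgebra

variable (R : Type*) [CommRing R] (M : Type w) [AddCommGroup M] [Module R M]

instance : AddCommGroup (TrivialLieAlgebra M) := inferInstanceAs (AddCommGroup M)

instance : Module R (TrivialLieAlgebra M) := inferInstanceAs (Module R M)

instance : LieRing (TrivialLieAlgebra M) where
  bracket _ _ := 0
  add_lie _ _ _ := (add_zero 0).symm
  lie_add _ _ _ := (add_zero 0).symm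
  lie_self _ := rfl
  leibniz_lie _ _ _ := (add_zero 0).symm

instance : LieAlgebra R (TrivialLieAlgebra M) where
  lie_smul t _ _ := (smul_zero t).symm

@[simp] theorem lie_eq_zero (x y : TrivialLieAlgebra M) : ⁅x, y⁆ = 0 := rfl

def equiv : TrivialLieAlgebra M ≃ₗ[R] M := LinearEquiv.refl R M

end TrivialLieAlgebra

section TwoCocycle

open LieModule.Cohomology

variable {R L M : Type*} [CommRing R] [LieRing L] [LieAlgebra R L] [AddCommGroup M] [Module R M]
  [LieRingModule L M] [LieModule R L M] (c : twoCocycle R L M)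

@[simps]
def LieAlgebra.ofTwoCocycleFst : ofTwoCocycle c →ₗ⁅R⁆ L where
  toFun x := ((ofProd c).symm x).1
  map_add' _ _ := rfl
  map_smul' _ _ := rfl
  map_lie' := rfl

@[simps]
def LieAlgebra.ofTwoCocycleSnd : ofTwoCocycle c →ₗ[R] M where
  toFun x := ((ofProd c).symm x).2
  map_add' _ _ := rfl
  map_smul' _ _ := rfl

theorem LieAlgebra.ofTwoCocycleSnd_lie [LieModule.IsTrivial L M] (x y : ofTwoCocycle c) :
    ofTwoCocycleSnd c ⁅x, y⁆ =
      (c : L →ₗ[R] L →ₗ[R] M) (ofTwoCocycleFst c x) (ofTwoCocycleFst c y) := by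
  simp [bracket_ofTwoCocycle, LieModule.IsTrivial.trivial]

end TwoCocycle

section Sym2Family

open QuadraticMap

variable {R M N ι : Type*} [CommRing R] [AddCommGroup M] [Module R M] [AddCommGroup N]
  [Module R N] [DecidableEq ι]

-- The diagonal terms cannot be taken to be `polar Q (v i) (v i) = 2 • Q (v i)`: that would lose
-- them in characteristic two.
def QuadraticMap.sym2Family (Q : QuadraticMap R M N) (v : ι → M) : Sym2 ι → N :=
  Sym2.lift ⟨fun i j => if i = j then Q (v i) else polar Q (v i) (v j), fun i j => by
    by_cases h : i = j
    · simp [h]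
    · simp [h, Ne.symm h, polar_comm]⟩

variable (Q : QuadraticMap R M N) (v : ι → M)

@[simp] theorem QuadraticMap.sym2Family_diag (i : ι) : Q.sym2Family v s(i, i) = Q (v i) := by
  simp [sym2Family]

theorem QuadraticMap.sym2Family_of_ne {i j : ι} (h : i ≠ j) :
    Q.sym2Family v s(i, j) = polar Q (v i) (v j) := by
  simp [sym2Family, h]

theorem QuadraticMap.sym2Family_mem_span_range (p : Sym2 ι) :
    Q.sym2Family v p ∈ Submodule.span R (Set.range Q) := by
  induction p using Sym2.ind with | _ i j
  by_cases h : i = j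
  · subst h
    exact Submodule.subset_span ⟨v i, (Q.sym2Family_diag v i).symm⟩
  · rw [Q.sym2Family_of_ne v h, polar]
    exact Submodule.sub_mem _ (Submodule.sub_mem _ (Submodule.subset_span ⟨_, rfl⟩)
      (Submodule.subset_span ⟨_, rfl⟩)) (Submodule.subset_span ⟨_, rfl⟩)

theorem QuadraticMap.apply_sum_mem_span_sym2Family [Fintype ι] (c : ι → R) :
    Q (∑ i, c i • v i) ∈ Submodule.span R (Set.range (Q.sym2Family v)) := by
  rw [Q.map_sum]
  refine Submodule.add_mem _ (Submodule.sum_mem _ fun i _ => ?_)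
    (Submodule.sum_mem _ fun p hp => ?_)
  · rw [QuadraticMap.map_smul, ← Q.sym2Family_diag v i]
    exact Submodule.smul_mem _ _ (Submodule.subset_span ⟨_, rfl⟩)
  · have hp : ¬p.IsDiag := (Finset.mem_filter.1 hp).2
    induction p using Sym2.ind with | _ i j
    rw [show (fun i => c i • v i) = c • v from rfl, polarSym2_map_smul]
    simp only [Sym2.map_mk, polarSym2_sym2Mk]
    rw [← Q.sym2Family_of_ne v (by simpa using hp)]
    exact Submodule.smul_mem _ _ (Submodule.subset_span ⟨_, rfl⟩)

theorem QuadraticMap.comp_sym2Family {M' N' : Type*} [AddCommGroup M'] [Module R M']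
    [AddCommGroup N'] [Module R N'] (Q' : QuadraticMap R M' N') (f : M →ₗ[R] M')
    (g : N →ₗ[R] N') (hQ : ∀ x, g (Q x) = Q' (f x)) :
    g ∘ Q.sym2Family v = Q'.sym2Family (f ∘ v) := by
  funext p
  induction p using Sym2.ind with | _ i j
  by_cases h : i = j
  · subst h
    simp [hQ]
  · simp [Q.sym2Family_of_ne v h, Q'.sym2Family_of_ne _ h, polar, hQ]

theorem linearIndependent_sym2Family_tmul [Fintype ι] (e : Basis ι R M) :
    LinearIndependent R
      ((LinearMap.BilinMap.toQuadraticMap (TensorProduct.mk R M M)).sym2Family e) := by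
  have hrepr (p : Sym2 ι) (k l : ι) :
      (e.tensorProduct e).repr
          ((LinearMap.BilinMap.toQuadraticMap (TensorProduct.mk R M M)).sym2Family e p) (k, l) =
        if s(k, l) = p then 1 else 0 := by
    induction p using Sym2.ind with | _ i j
    by_cases h : i = j
    · subst h
      simp only [sym2Family_diag, LinearMap.BilinMap.toQuadraticMap_apply,
        TensorProduct.mk_apply, ← Basis.tensorProduct_apply, Basis.repr_self,
        Finsupp.single_apply, Sym2.eq_iff]
      grind
    · simp only [sym2Family_of_ne _ _ h, LinearMap.BilinMap.polar_toQuadraticMap,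
        TensorProduct.mk_apply, ← Basis.tensorProduct_apply, map_add, Basis.repr_self,
        Finsupp.add_apply, Finsupp.single_apply, Sym2.eq_iff]
      grind
  rw [Fintype.linearIndependent_iff]
  intro g hg p
  induction p using Sym2.ind with | _ k l
  simpa [hrepr] using congrArg (fun x => (e.tensorProduct e).repr x (k, l)) hg

end Sym2Family

theorem card_sym2_fin (m : ℕ) : Fintype.card (Sym2 (Fin m)) = m * (m + 1) / 2 := by
  rw [Sym2.card, Fintype.card_fin, Nat.choose_two_right, Nat.add_sub_cancel, mul_comm]

section TensorSquare

variable {F : Type u} [Field F] {L : Type v} [LieRing L] [LieAlgebra F L]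

noncomputable def tensorMk : FreeLieAlgebra F (L × L) →ₗ⁅F⁆ NTensor F L :=
  { (LieSubmodule.lieSpan F _ (tensorRel F L)).toSubmodule.mkQ with map_lie' := rfl }

@[simp] theorem tensorMk_of (a b : L) : tensorMk (FreeLieAlgebra.of F (a, b)) = tmk F L a b :=
  rfl

theorem tensorMk_eq_zero {x : FreeLieAlgebra F (L × L)} (hx : x ∈ tensorRel F L) :
    tensorMk x = 0 :=
  LieSubmodule.Quotient.mk_eq_zero'.mpr (LieSubmodule.subset_lieSpan hx)

theorem tmk_smul_left (c : F) (a b : L) : tmk F L (c • a) b = c • tmk F L a b := by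
  simpa [sub_eq_zero] using tensorMk_eq_zero (F := F) (Or.inl ⟨c, a, b, rfl⟩)

theorem tmk_smul_right (c : F) (a b : L) : tmk F L a (c • b) = c • tmk F L a b := by
  simpa [sub_eq_zero] using tensorMk_eq_zero (F := F) (Or.inr (Or.inl ⟨c, a, b, rfl⟩))

theorem tmk_add_left (a a' b : L) : tmk F L (a + a') b = tmk F L a b + tmk F L a' b := by
  simpa [sub_sub, sub_eq_zero] using
    tensorMk_eq_zero (F := F) (Or.inr (Or.inr (Or.inl ⟨a, a', b, rfl⟩)))

theorem tmk_add_right (a b b' : L) : tmk F L a (b + b') = tmk F L a b + tmk F L a b' := by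
  simpa [sub_sub, sub_eq_zero] using
    tensorMk_eq_zero (F := F) (Or.inr (Or.inr (Or.inr (Or.inl ⟨a, b, b', rfl⟩))))

theorem tmk_lie_left (a a' b : L) :
    tmk F L ⁅a, a'⁆ b = tmk F L a ⁅a', b⁆ - tmk F L a' ⁅a, b⁆ := by
  have := tensorMk_eq_zero (F := F)
    (Or.inr (Or.inr (Or.inr (Or.inr (Or.inl ⟨a, a', b, rfl⟩)))))
  simp only [map_add, map_sub, tensorMk_of] at this
  linear_combination (norm := abel) this

theorem tmk_lie_right (a b b' : L) :
    tmk F L a ⁅b, b'⁆ = tmk F L ⁅b', a⁆ b - tmk F L ⁅b, a⁆ b' := by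
  have := tensorMk_eq_zero (F := F)
    (Or.inr (Or.inr (Or.inr (Or.inr (Or.inr (Or.inl ⟨a, b, b', rfl⟩))))))
  simp only [map_add, map_sub, tensorMk_of] at this
  linear_combination (norm := abel) this

theorem lie_tmk_tmk (a b a' b' : L) :
    ⁅tmk F L a b, tmk F L a' b'⁆ = -tmk F L ⁅b, a⁆ ⁅a', b'⁆ := by
  have := tensorMk_eq_zero (F := F)
    (Or.inr (Or.inr (Or.inr (Or.inr (Or.inr (Or.inr ⟨a, b, a', b', rfl⟩))))))
  simp only [map_add, LieHom.map_lie, tensorMk_of] at this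
  linear_combination (norm := abel) this

variable (F L) in
noncomputable def tmkBilin : L →ₗ[F] L →ₗ[F] NTensor F L :=
  LinearMap.mk₂ F (tmk F L) tmk_add_left tmk_smul_left tmk_add_right tmk_smul_right

@[simp] theorem tmkBilin_apply (a b : L) : tmkBilin F L a b = tmk F L a b := rfl

@[simp] theorem tmk_zero_left (b : L) : tmk F L 0 b = 0 :=
  LinearMap.map_zero₂ (tmkBilin F L) b

@[simp] theorem tmk_zero_right (a : L) : tmk F L a 0 = 0 :=
  map_zero (tmkBilin F L a)

theorem tmk_neg_right (a b : L) : tmk F L a (-b) = -tmk F L a b :=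
  map_neg (tmkBilin F L a) b

theorem tmk_lie_swap (x z y : L) : tmk F L ⁅x, z⁆ y = tmk F L y ⁅z, x⁆ := by
  have h := tmk_lie_right (F := F) z x y
  rw [tmk_lie_left, ← lie_skew x y, tmk_neg_right] at h
  linear_combination (norm := abel) h

variable {M : Type w} [AddCommGroup M] [Module F M]

noncomputable def tensorLift (b : L →ₗ[F] L →ₗ[F] M)
    (h_lie_left : ∀ a a' c : L, b ⁅a, a'⁆ c = b a ⁅a', c⁆ - b a' ⁅a, c⁆)
    (h_lie_right : ∀ a c c' : L, b a ⁅c, c'⁆ = b ⁅c', a⁆ c - b ⁅c, a⁆ c')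
    (h_lie_lie : ∀ a c a' c' : L, b ⁅c, a⁆ ⁅a', c'⁆ = 0) : NTensor F L →ₗ[F] M :=
  -- A Lie hom into an abelian Lie algebra, so that its kernel is an ideal.
  let f : FreeLieAlgebra F (L × L) →ₗ⁅F⁆ TrivialLieAlgebra M :=
    FreeLieAlgebra.lift F fun p => (TrivialLieAlgebra.equiv F M).symm (b p.1 p.2)
  have hf : LieSubmodule.lieSpan F _ (tensorRel F L) ≤ f.ker := by
    rw [LieSubmodule.lieSpan_le]
    rintro x (⟨c, a, a', rfl⟩ | ⟨c, a, a', rfl⟩ | ⟨a, a', c, rfl⟩ | ⟨a, c, c', rfl⟩ |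
      ⟨a, a', c, rfl⟩ | ⟨a, c, c', rfl⟩ | ⟨a, c, a', c', rfl⟩)
    all_goals simp [f, FreeLieAlgebra.lift_of_apply]
    · simp [h_lie_left]
    · simp [h_lie_right]
    · simp [h_lie_lie]
  (TrivialLieAlgebra.equiv F M).toLinearMap ∘ₗ
    Submodule.liftQ _ f.toLinearMap fun _ hx => LieHom.mem_ker.mp (hf hx)

@[simp] theorem tensorLift_tmk (b : L →ₗ[F] L →ₗ[F] M) (h₁ h₂ h₃) (a c : L) :
    tensorLift b h₁ h₂ h₃ (tmk F L a c) = b a c :=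
  congrArg (TrivialLieAlgebra.equiv F M) (FreeLieAlgebra.lift_of_apply _ _)

variable (F L) in
theorem span_tmk_eq_top : Submodule.span F (Set.range fun p : L × L => tmk F L p.1 p.2) = ⊤ := by
  set S := Submodule.span F (Set.range fun p : L × L => tmk F L p.1 p.2)
  have hS :
      Submodule.map₂ (LinearMap.mk₂ F (⁅·, ·⁆) add_lie smul_lie lie_add lie_smul) S S ≤ S := by
    rw [Submodule.map₂_span_span, Submodule.span_le]
    rintro _ ⟨_, ⟨p, rfl⟩, _, ⟨q, rfl⟩, rfl⟩
    simpa [lie_tmk_tmk] using S.neg_mem (Submodule.subset_span ⟨(⁅p.2, p.1⁆, ⁅q.1, q.2⁆), rfl⟩)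
  let T : LieSubalgebra F (NTensor F L) :=
    { S with lie_mem' := fun hx hy => hS (Submodule.apply_mem_map₂ _ hx hy) }
  have hT : T.comap tensorMk = ⊤ :=
    FreeLieAlgebra.eq_top_of_forall_of_mem _ fun p => Submodule.subset_span ⟨p, rfl⟩
  refine eq_top_iff.2 fun x _ => ?_
  obtain ⟨z, rfl⟩ := Submodule.mkQ_surjective _ x
  exact (hT ▸ LieSubalgebra.mem_top z : z ∈ T.comap tensorMk)

variable (F L) in
noncomputable def tmkQuadratic : QuadraticMap F L (NTensor F L) :=
  LinearMap.BilinMap.toQuadraticMap (tmkBilin F L)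

@[simp] theorem tmkQuadratic_apply (a : L) : tmkQuadratic F L a = tmk F L a a := rfl

variable (F L) in
noncomputable def squareSpan : Submodule F (NTensor F L) :=
  Submodule.span F (Set.range (tmkQuadratic F L))

end TensorSquare

section ClassTwo

variable {F : Type u} [Field F] {L : Type v} [LieRing L] [LieAlgebra F L]

theorem lie_eq_zero_of_mem_derivedSeries (h2 : LieModule.lowerCentralSeries F L L 2 = ⊥)
    {c : L} (hc : c ∈ derivedSeries F L 1) (x : L) : ⁅x, c⁆ = 0 := by
  have hc' : c ∈ LieModule.lowerCentralSeries F L L 1 :=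
    LieModule.derivedSeries_le_lowerCentralSeries F L 1 hc
  have : ⁅x, c⁆ ∈ LieModule.lowerCentralSeries F L L 2 :=
    LieSubmodule.lie_mem_lie (LieSubmodule.mem_top x) hc'
  rwa [h2] at this

theorem tmk_swap_of_mem_derivedSeries {c : L} (hc : c ∈ derivedSeries F L 1) (x : L) :
    tmk F L c x = -tmk F L x c := by
  suffices c ∈ LinearMap.ker ((tmkBilin F L).flip x + tmkBilin F L x) by
    simpa [eq_neg_iff_add_eq_zero] using this
  refine derivedSeries_one_toSubmodule_le (fun u v => LinearMap.mem_ker.2 ?_) hc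
  simp only [LinearMap.add_apply, LinearMap.flip_apply, tmkBilin_apply]
  rw [tmk_lie_swap, ← lie_skew u v, tmk_neg_right, add_neg_cancel]

theorem tmk_eq_zero_of_mem_derivedSeries (h2 : LieModule.lowerCentralSeries F L L 2 = ⊥)
    {c d : L} (hc : c ∈ derivedSeries F L 1) (hd : d ∈ derivedSeries F L 1) :
    tmk F L c d = 0 := by
  suffices c ∈ LinearMap.ker ((tmkBilin F L).flip d) by simpa using this
  refine derivedSeries_one_toSubmodule_le (fun u v => LinearMap.mem_ker.2 ?_) hc
  simp [tmk_lie_left, lie_eq_zero_of_mem_derivedSeries h2 hd]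

theorem tmk_add_self_of_mem_derivedSeries (h2 : LieModule.lowerCentralSeries F L L 2 = ⊥)
    (x : L) {c : L} (hc : c ∈ derivedSeries F L 1) :
    tmk F L (x + c) (x + c) = tmk F L x x := by
  rw [tmk_add_left, tmk_add_right, tmk_add_right, tmk_swap_of_mem_derivedSeries hc x,
    tmk_eq_zero_of_mem_derivedSeries h2 hc hc]
  abel

end ClassTwo

section Presentation

variable (F : Type u) [Field F] (L : Type v) [LieRing L] [LieAlgebra F L]

@[simp] theorem presHom_of (a : L) : presHom F L (FreeLieAlgebra.of F a) = a :=
  FreeLieAlgebra.lift_of_apply _ _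

theorem presHom_surjective : Function.Surjective (presHom F L) :=
  fun a => ⟨_, presHom_of F L a⟩

noncomputable def presSection : L →ₗ[F] FreeLieAlgebra F L :=
  ((presHom F L : FreeLieAlgebra F L →ₗ[F] L).exists_rightInverse_of_surjective
    (LinearMap.range_eq_top.2 (presHom_surjective F L))).choose

@[simp] theorem presHom_presSection (a : L) : presHom F L (presSection F L a) = a :=
  LinearMap.congr_fun ((presHom F L : FreeLieAlgebra F L →ₗ[F] L).exists_rightInverse_of_surjective
    (LinearMap.range_eq_top.2 (presHom_surjective F L))).choose_spec a

-- For the free presentation `R ↪ F ↠ L`: `[R, F]`, `F²` and `F² / [R, F]`.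
noncomputable abbrev presCommutator : Submodule F (FreeLieAlgebra F L) :=
  (⁅presKer F L, ⊤⁆ : LieIdeal F (FreeLieAlgebra F L)).toSubmodule

noncomputable abbrev freeDerived : Submodule F (FreeLieAlgebra F L) :=
  (derivedSeries F (FreeLieAlgebra F L) 1).toSubmodule

noncomputable abbrev FreeDerivedQuot : Type (max u v) :=
  freeDerived F L ⧸ (presCommutator F L).comap (freeDerived F L).subtype

noncomputable def bracketClass :
    FreeLieAlgebra F L →ₗ[F] FreeLieAlgebra F L →ₗ[F] FreeDerivedQuot F L :=
  (LinearMap.mk₂ F (fun x y => ⟨⁅x, y⁆, lie_mem_derivedSeries_one x y⟩)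
    (fun _ _ _ => Subtype.ext (add_lie _ _ _)) (fun _ _ _ => Subtype.ext (smul_lie _ _ _))
    (fun _ _ _ => Subtype.ext (lie_add _ _ _)) (fun _ _ _ => Subtype.ext (lie_smul _ _ _))).compr₂
    (Submodule.mkQ _)

variable {F L}

theorem presSection_presHom_sub_mem (x : FreeLieAlgebra F L) :
    presSection F L (presHom F L x) - x ∈ presKer F L := by
  simp [presKer]

theorem bracketClass_eq_mk (x y : FreeLieAlgebra F L) :
    bracketClass F L x y = Submodule.Quotient.mk ⟨⁅x, y⁆, lie_mem_derivedSeries_one x y⟩ :=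
  rfl

theorem bracketClass_swap (x y : FreeLieAlgebra F L) :
    bracketClass F L y x = -bracketClass F L x y := by
  rw [bracketClass_eq_mk, bracketClass_eq_mk, ← Submodule.Quotient.mk_neg]
  exact congrArg _ (Subtype.ext (lie_skew y x).symm)

theorem bracketClass_eq_zero_of_mem_left {x : FreeLieAlgebra F L} (hx : x ∈ presKer F L)
    (y : FreeLieAlgebra F L) : bracketClass F L x y = 0 :=
  (Submodule.Quotient.mk_eq_zero _).2 (LieSubmodule.lie_mem_lie hx (LieSubmodule.mem_top y))

theorem bracketClass_eq_zero_of_mem_right (x : FreeLieAlgebra F L) {y : FreeLieAlgebra F L}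
    (hy : y ∈ presKer F L) : bracketClass F L x y = 0 := by
  rw [bracketClass_swap, bracketClass_eq_zero_of_mem_left hy, neg_zero]

theorem bracketClass_lie_left (x y z : FreeLieAlgebra F L) :
    bracketClass F L ⁅x, y⁆ z = bracketClass F L x ⁅y, z⁆ - bracketClass F L y ⁅x, z⁆ := by
  simp only [bracketClass_eq_mk, ← Submodule.Quotient.mk_sub]
  exact congrArg _ (Subtype.ext (lie_lie x y z))

theorem bracketClass_lie_right (x y z : FreeLieAlgebra F L) :
    bracketClass F L x ⁅y, z⁆ = bracketClass F L ⁅z, x⁆ y - bracketClass F L ⁅y, x⁆ z := by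
  simp only [bracketClass_eq_mk, ← Submodule.Quotient.mk_sub]
  refine congrArg _ (Subtype.ext ?_)
  show ⁅x, ⁅y, z⁆⁆ = ⁅⁅z, x⁆, y⁆ - ⁅⁅y, x⁆, z⁆
  rw [lie_lie, lie_lie, ← lie_skew z y, ← lie_skew x z, lie_neg, lie_neg]
  linear_combination (norm := abel) -lie_jacobi x y z

theorem bracketClass_presSection (x y : FreeLieAlgebra F L) :
    bracketClass F L (presSection F L (presHom F L x)) (presSection F L (presHom F L y)) =
      bracketClass F L x y := by
  rw [← sub_eq_zero]
  calc _ = bracketClass F L (presSection F L (presHom F L x) - x)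
          (presSection F L (presHom F L y)) +
        bracketClass F L x (presSection F L (presHom F L y) - y) := by simp
    _ = 0 := by
      rw [bracketClass_eq_zero_of_mem_left (presSection_presHom_sub_mem x),
        bracketClass_eq_zero_of_mem_right _ (presSection_presHom_sub_mem y), add_zero]

variable (F L) in
theorem span_range_bracketClass :
    Submodule.span F (Set.range fun p : FreeLieAlgebra F L × FreeLieAlgebra F L =>
      bracketClass F L p.1 p.2) = ⊤ := by
  set W := Submodule.span F (Set.range fun p : FreeLieAlgebra F L × FreeLieAlgebra F L =>
    bracketClass F L p.1 p.2)
  have hle : freeDerived F L ≤ (W.comap (Submodule.mkQ _)).map (freeDerived F L).subtype :=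
    derivedSeries_one_toSubmodule_le fun x y =>
      ⟨⟨⁅x, y⁆, lie_mem_derivedSeries_one x y⟩, Submodule.subset_span ⟨(x, y), rfl⟩, rfl⟩
  refine eq_top_iff.2 fun q _ => ?_
  obtain ⟨s, rfl⟩ := Submodule.mkQ_surjective _ q
  obtain ⟨t, ht, hts⟩ := hle s.2
  exact Subtype.ext hts ▸ ht

end Presentation

section TensorToDerivedQuot

variable {F : Type u} [Field F] {L : Type v} [LieRing L] [LieAlgebra F L]

variable (F L) in
noncomputable def presBracket : L →ₗ[F] L →ₗ[F] FreeDerivedQuot F L :=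
  (bracketClass F L).compl₁₂ (presSection F L) (presSection F L)

theorem presBracket_presHom (x y : FreeLieAlgebra F L) :
    presBracket F L (presHom F L x) (presHom F L y) = bracketClass F L x y :=
  bracketClass_presSection x y

theorem presBracket_lie_left (a a' c : L) :
    presBracket F L ⁅a, a'⁆ c = presBracket F L a ⁅a', c⁆ - presBracket F L a' ⁅a, c⁆ := by
  obtain ⟨x, rfl⟩ := presHom_surjective F L a
  obtain ⟨x', rfl⟩ := presHom_surjective F L a'
  obtain ⟨z, rfl⟩ := presHom_surjective F L c
  simp only [← LieHom.map_lie, presBracket_presHom, bracketClass_lie_left]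

theorem presBracket_lie_right (a c c' : L) :
    presBracket F L a ⁅c, c'⁆ = presBracket F L ⁅c', a⁆ c - presBracket F L ⁅c, a⁆ c' := by
  obtain ⟨x, rfl⟩ := presHom_surjective F L a
  obtain ⟨z, rfl⟩ := presHom_surjective F L c
  obtain ⟨z', rfl⟩ := presHom_surjective F L c'
  simp only [← LieHom.map_lie, presBracket_presHom, bracketClass_lie_right]

theorem presBracket_lie_lie (h2 : LieModule.lowerCentralSeries F L L 2 = ⊥) (a c a' c' : L) :
    presBracket F L ⁅c, a⁆ ⁅a', c'⁆ = 0 := by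
  obtain ⟨x, rfl⟩ := presHom_surjective F L a
  obtain ⟨z, rfl⟩ := presHom_surjective F L c
  obtain ⟨w, hw⟩ := presHom_surjective F L ⁅a', c'⁆
  have hcentral (y : FreeLieAlgebra F L) : ⁅y, w⁆ ∈ presKer F L := by
    rw [presKer, LieHom.mem_ker, LieHom.map_lie, hw]
    exact lie_eq_zero_of_mem_derivedSeries h2 (lie_mem_derivedSeries_one a' c') _
  rw [← hw, ← LieHom.map_lie, presBracket_presHom, bracketClass_lie_left,
    bracketClass_eq_zero_of_mem_right _ (hcentral x),
    bracketClass_eq_zero_of_mem_right _ (hcentral z), sub_zero]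

variable (F L) in
noncomputable def tensorToDerivedQuot (h2 : LieModule.lowerCentralSeries F L L 2 = ⊥) :
    NTensor F L →ₗ[F] FreeDerivedQuot F L :=
  tensorLift (presBracket F L) presBracket_lie_left presBracket_lie_right
    (presBracket_lie_lie h2)

@[simp] theorem tensorToDerivedQuot_tmk (h2 : LieModule.lowerCentralSeries F L L 2 = ⊥)
    (a c : L) : tensorToDerivedQuot F L h2 (tmk F L a c) = presBracket F L a c :=
  tensorLift_tmk ..

theorem tensorToDerivedQuot_surjective (h2 : LieModule.lowerCentralSeries F L L 2 = ⊥) :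
    Function.Surjective (tensorToDerivedQuot F L h2) := by
  rw [← LinearMap.range_eq_top, eq_top_iff, ← span_range_bracketClass, Submodule.span_le]
  rintro _ ⟨⟨x, y⟩, rfl⟩
  exact ⟨tmk F L (presHom F L x) (presHom F L y), by simp [presBracket_presHom]⟩

end TensorToDerivedQuot

section SquareQuotient

open LieModule.Cohomology

variable {F : Type u} [Field F] {L : Type v} [LieRing L] [LieAlgebra F L]

variable (F L) in
noncomputable def squareCocycle :
    twoCocycle F L (TrivialLieModule F L (NTensor F L ⧸ squareSpan F L)) :=
  let ω : L →ₗ[F] L →ₗ[F] TrivialLieModule F L (NTensor F L ⧸ squareSpan F L) :=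
    ((tmkBilin F L).compr₂ (squareSpan F L).mkQ).compr₂
      (TrivialLieModule.equiv F L _).symm.toLinearMap
  have hω (a : L) : ω a a = 0 := by
    simp only [ω, LinearMap.compr₂_apply, LinearEquiv.coe_coe, LinearEquiv.map_eq_zero_iff,
      Submodule.mkQ_apply, Submodule.Quotient.mk_eq_zero]
    exact Submodule.subset_span ⟨a, rfl⟩
  ⟨⟨ω, hω⟩, (mem_twoCocycle_iff_of_trivial F L _ ⟨ω, hω⟩).2 fun x y z => by
    change ω x ⁅y, z⁆ = ω ⁅x, y⁆ z + ω y ⁅x, z⁆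
    simp [ω, tmk_lie_left]⟩

variable (F L) in
noncomputable def cocycleLift :
    FreeLieAlgebra F L →ₗ⁅F⁆ LieAlgebra.ofTwoCocycle (squareCocycle F L) :=
  FreeLieAlgebra.lift F fun a => LieAlgebra.ofProd _ (a, 0)

theorem ofTwoCocycleFst_cocycleLift (x : FreeLieAlgebra F L) :
    LieAlgebra.ofTwoCocycleFst _ (cocycleLift F L x) = presHom F L x := by
  have : (LieAlgebra.ofTwoCocycleFst _).comp (cocycleLift F L) = presHom F L :=
    FreeLieAlgebra.hom_ext fun a => by simp [cocycleLift, FreeLieAlgebra.lift_of_apply]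
  exact LieHom.congr_fun this x

theorem ofTwoCocycleSnd_cocycleLift_lie (x y : FreeLieAlgebra F L) :
    LieAlgebra.ofTwoCocycleSnd _ (cocycleLift F L ⁅x, y⁆) =
      (TrivialLieModule.equiv F L _).symm
        ((squareSpan F L).mkQ (tmk F L (presHom F L x) (presHom F L y))) := by
  rw [LieHom.map_lie, LieAlgebra.ofTwoCocycleSnd_lie, ofTwoCocycleFst_cocycleLift,
    ofTwoCocycleFst_cocycleLift]
  rfl

variable (F L) in
noncomputable def derivedQuotToSquareQuot :
    FreeDerivedQuot F L →ₗ[F] NTensor F L ⧸ squareSpan F L :=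
  let f : FreeLieAlgebra F L →ₗ[F] NTensor F L ⧸ squareSpan F L :=
    (TrivialLieModule.equiv F L _).toLinearMap ∘ₗ LieAlgebra.ofTwoCocycleSnd _ ∘ₗ
      (cocycleLift F L : FreeLieAlgebra F L →ₗ[F] LieAlgebra.ofTwoCocycle (squareCocycle F L))
  have hf : presCommutator F L ≤ LinearMap.ker f := by
    rw [presCommutator, LieSubmodule.lieIdeal_oper_eq_linear_span', Submodule.span_le]
    rintro _ ⟨r, hr, y, -, rfl⟩
    rw [SetLike.mem_coe, LinearMap.mem_ker, LinearMap.comp_apply, LinearMap.comp_apply,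
      LieHom.coe_toLinearMap, ofTwoCocycleSnd_cocycleLift_lie, LieHom.mem_ker.1 hr]
    simp
  Submodule.liftQ _ (f ∘ₗ (freeDerived F L).subtype) fun _ hx => hf hx

theorem derivedQuotToSquareQuot_bracketClass (x y : FreeLieAlgebra F L) :
    derivedQuotToSquareQuot F L (bracketClass F L x y) =
      (squareSpan F L).mkQ (tmk F L (presHom F L x) (presHom F L y)) :=
  congrArg (TrivialLieModule.equiv F L _) (ofTwoCocycleSnd_cocycleLift_lie x y)

theorem derivedQuotToSquareQuot_comp_tensorToDerivedQuot
    (h2 : LieModule.lowerCentralSeries F L L 2 = ⊥) :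
    derivedQuotToSquareQuot F L ∘ₗ tensorToDerivedQuot F L h2 = (squareSpan F L).mkQ := by
  refine LinearMap.ext_on (span_tmk_eq_top F L) ?_
  rintro _ ⟨⟨a, c⟩, rfl⟩
  simp [presBracket, derivedQuotToSquareQuot_bracketClass]

theorem ker_tensorToDerivedQuot (h2 : LieModule.lowerCentralSeries F L L 2 = ⊥) :
    LinearMap.ker (tensorToDerivedQuot F L h2) = squareSpan F L := by
  refine le_antisymm (fun v hv => ?_) ?_
  · rw [← Submodule.Quotient.mk_eq_zero, ← Submodule.mkQ_apply,
      ← derivedQuotToSquareQuot_comp_tensorToDerivedQuot h2, LinearMap.comp_apply,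
      LinearMap.mem_ker.1 hv, map_zero]
  · rw [squareSpan, Submodule.span_le]
    rintro _ ⟨a, rfl⟩
    simp [presBracket, bracketClass_eq_mk]

end SquareQuotient

section Multiplier

variable (F : Type u) [Field F] (L : Type v) [LieRing L] [LieAlgebra F L]

noncomputable def multiplierToDerivedQuot : Multiplier F L →ₗ[F] FreeDerivedQuot F L :=
  Submodule.mapQ _ _ (Submodule.inclusion fun _ hx => ((LieSubmodule.mem_inf _ _ _).1 hx).2)
    fun _ hx => hx

theorem multiplierToDerivedQuot_injective :
    Function.Injective (multiplierToDerivedQuot F L) :=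
  LinearMap.ker_eq_bot.1 <| Submodule.ker_liftQ_eq_bot _ _ _ fun _ hx =>
    (Submodule.Quotient.mk_eq_zero ((presCommutator F L).comap (freeDerived F L).subtype)).1 hx

variable {F L} in
theorem presHom_mem_derivedSeries {x : FreeLieAlgebra F L} (hx : x ∈ freeDerived F L) :
    presHom F L x ∈ derivedSeries F L 1 :=
  derivedSeries_one_toSubmodule_le (p := (derivedSeries F L 1).toSubmodule.comap
    (presHom F L : FreeLieAlgebra F L →ₗ[F] L))
    (fun x y => by
      change presHom F L ⁅x, y⁆ ∈ derivedSeries F L 1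
      rw [LieHom.map_lie]
      exact lie_mem_derivedSeries_one _ _) hx

noncomputable def derivedQuotToDerived : FreeDerivedQuot F L →ₗ[F] derivedSeries F L 1 :=
  Submodule.liftQ _ ((presHom F L : FreeLieAlgebra F L →ₗ[F] L).restrict
      fun _ hx => presHom_mem_derivedSeries hx)
    fun x hx => Subtype.ext ((LieSubmodule.lie_le_left _ _ hx : x.1 ∈ presKer F L))

theorem derivedQuotToDerived_surjective : Function.Surjective (derivedQuotToDerived F L) := by
  rintro ⟨d, hd⟩
  rw [← LieIdeal.derivedSeries_map_eq 1 (presHom_surjective F L)] at hd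
  obtain ⟨x, hx⟩ := LieIdeal.mem_map_of_surjective (presHom_surjective F L) hd
  exact ⟨Submodule.Quotient.mk ⟨x, x.2⟩, Subtype.ext hx⟩

theorem ker_derivedQuotToDerived :
    LinearMap.ker (derivedQuotToDerived F L) = LinearMap.range (multiplierToDerivedQuot F L) := by
  ext q
  obtain ⟨x, rfl⟩ := Submodule.mkQ_surjective _ q
  constructor
  · intro hx
    have hR : x.1 ∈ presKer F L := LieHom.mem_ker.2 (congrArg Subtype.val hx)
    exact ⟨Submodule.Quotient.mk ⟨x.1, (LieSubmodule.mem_inf _ _ _).2 ⟨hR, x.2⟩⟩, rfl⟩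
  · rintro ⟨y, hy⟩
    obtain ⟨z, rfl⟩ := Submodule.mkQ_surjective _ y
    rw [← hy]
    exact Subtype.ext (LieHom.mem_ker.1 ((LieSubmodule.mem_inf _ _ _).1 z.2).1)

end Multiplier

section SquareSpanBasis

open scoped TensorProduct

variable {F : Type u} [Field F] {L : Type v} [LieRing L] [LieAlgebra F L]

variable (F L) in
noncomputable def abelianizationMk : L →ₗ[F] AbQuot F L :=
  (LieSubmodule.Quotient.mk' (derivedSeries F L 1)).toLinearMap

@[simp] theorem abelianizationMk_lie (x y : L) : abelianizationMk F L ⁅x, y⁆ = 0 :=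
  (LieSubmodule.Quotient.mk_eq_zero _).2 (lie_mem_derivedSeries_one x y)

variable (F L) in
noncomputable def tensorToAbQuotTensor : NTensor F L →ₗ[F] AbQuot F L ⊗[F] AbQuot F L :=
  tensorLift ((TensorProduct.mk F _ _).compl₁₂ (abelianizationMk F L) (abelianizationMk F L))
    (fun _ _ _ => by simp) (fun _ _ _ => by simp) (fun _ _ _ _ => by simp)

theorem tensorToAbQuotTensor_tmk (a c : L) :
    tensorToAbQuotTensor F L (tmk F L a c) = abelianizationMk F L a ⊗ₜ abelianizationMk F L c :=
  tensorLift_tmk ..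

variable {ι : Type*} [Fintype ι] [DecidableEq ι] (e : Basis ι F (AbQuot F L))
  {s : AbQuot F L →ₗ[F] L}

theorem squareSpan_eq_span_sym2Family (h2 : LieModule.lowerCentralSeries F L L 2 = ⊥)
    (hs : ∀ y, abelianizationMk F L (s y) = y) :
    squareSpan F L = Submodule.span F (Set.range ((tmkQuadratic F L).sym2Family (s ∘ e))) := by
  refine le_antisymm (Submodule.span_le.2 ?_) (Submodule.span_le.2 ?_)
  · rintro _ ⟨x, rfl⟩
    have hx : x - s (abelianizationMk F L x) ∈ derivedSeries F L 1 :=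
      (LieSubmodule.Quotient.mk_eq_zero _).1
        (show abelianizationMk F L (x - s (abelianizationMk F L x)) = 0 by
          rw [map_sub, hs, sub_self])
    have : tmkQuadratic F L x =
        tmkQuadratic F L (∑ i, e.repr (abelianizationMk F L x) i • s (e i)) := by
      simp only [← map_smul, ← map_sum, e.sum_repr, tmkQuadratic_apply]
      simpa using tmk_add_self_of_mem_derivedSeries h2 (s (abelianizationMk F L x)) hx
    rw [SetLike.mem_coe, this]
    exact (tmkQuadratic F L).apply_sum_mem_span_sym2Family (s ∘ e) _
  · rintro _ ⟨p, rfl⟩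
    exact (tmkQuadratic F L).sym2Family_mem_span_range _ p

theorem linearIndependent_sym2Family_tmkQuadratic (hs : ∀ y, abelianizationMk F L (s y) = y) :
    LinearIndependent F ((tmkQuadratic F L).sym2Family (s ∘ e)) := by
  refine LinearIndependent.of_comp (tensorToAbQuotTensor F L) ?_
  rw [(tmkQuadratic F L).comp_sym2Family _
    (LinearMap.BilinMap.toQuadraticMap (TensorProduct.mk F _ _)) (abelianizationMk F L) _
    fun x => tensorToAbQuotTensor_tmk x x]
  have he : abelianizationMk F L ∘ s ∘ e = e := funext fun i => hs (e i)
  rw [he]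
  exact linearIndependent_sym2Family_tmul e

theorem nonempty_squareSpan_equiv [FiniteDimensional F L]
    (h2 : LieModule.lowerCentralSeries F L L 2 = ⊥) {m : ℕ} (hm : finrank F (AbQuot F L) = m) :
    Nonempty (squareSpan F L ≃ₗ[F] AbLie F (m * (m + 1) / 2)) := by
  obtain ⟨s, hs⟩ := (abelianizationMk F L).exists_rightInverse_of_surjective
    (LinearMap.range_eq_top.2 (LieSubmodule.Quotient.surjective_mk' _))
  let e := finBasisOfFinrankEq F (AbQuot F L) hm
  have hs' := LinearMap.congr_fun hs
  let b := (Basis.span (linearIndependent_sym2Family_tmkQuadratic e hs')).map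
    (LinearEquiv.ofEq _ _ (squareSpan_eq_span_sym2Family e h2 hs').symm)
  exact ⟨b.equivFun.trans
    (LinearEquiv.funCongrLeft F F (Fintype.equivFinOfCardEq (card_sym2_fin m)).symm)⟩

end SquareSpanBasis

/-- for class-two `L`, `L ⊗ L ≅ M(L) ⊕ L² ⊕ A(m(m+1)/2)`. -/
theorem tensor_square_of_class_two (F : Type u) [Field F]
    (L : Type u) [LieRing L] [LieAlgebra F L] [FiniteDimensional F L]
    (h2 : LieModule.lowerCentralSeries F L L 2 = ⊥) (m : ℕ)
    (hm : Module.finrank F (AbQuot F L) = m) :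
    Nonempty (NTensor F L ≃ₗ[F]
      (Multiplier F L × ↥(derivedSeries F L 1) × AbLie F (m * (m + 1) / 2))) := by
  obtain ⟨eβ⟩ := nonempty_linearEquiv_ker_prod _ (tensorToDerivedQuot_surjective h2)
  obtain ⟨eQuot⟩ := nonempty_linearEquiv_ker_prod _ (derivedQuotToDerived_surjective F L)
  obtain ⟨eSq⟩ := nonempty_squareSpan_equiv h2 hm
  let eKerβ := (LinearEquiv.ofEq _ _ (ker_tensorToDerivedQuot h2)).trans eSq
  let eKerQuot := (LinearEquiv.ofEq _ _ (ker_derivedQuotToDerived F L)).trans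
    (LinearEquiv.ofInjective _ (multiplierToDerivedQuot_injective F L)).symm
  exact ⟨eβ.trans <| (eKerβ.prodCongr (eQuot.trans (eKerQuot.prodCongr (LinearEquiv.refl F _)))).trans <|
    (LinearEquiv.prodComm F _ _).trans (LinearEquiv.prodAssoc F _ _ _)⟩
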